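/- Let σ = τ_λ with λ ∈ {1, x, y}, let ε ∈ {1,-1}, and let u = δ + αx + βy + γz with δ, α, β, γ ∈ O_K, σ(u) = ε·u, and ν_D(u) = 1/2 (i.e. ν_K(Nrd(u)) = 1). Then there exists an invertible t ∈ D with u = σ(t)·(βy + γz)·t; that is, the one-dimensional ε-hermitian forms ⟨u⟩ and ⟨βy + γz⟩ over (D, σ) are isometric. -/

import Mathlib

noncomputable section

/-- A surjective discrete valuation `ν : K → ℤ` on a field `K`
(the value of `ν` at `0` is irrelevant: only nonzero elements are constrained). -/
structure DVal (K : Type) [Field K] : Type where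
  ν : K → ℤ
  ν_mul : ∀ x y : K, x ≠ 0 → y ≠ 0 → ν (x * y) = ν x + ν y
  ν_add : ∀ x y : K, x ≠ 0 → y ≠ 0 → x + y ≠ 0 → min (ν x) (ν y) ≤ ν (x + y)
  ν_one : ν 1 = 0
  ν_surj : ∀ n : ℤ, ∃ x : K, x ≠ 0 ∧ ν x = n

namespace DVal

variable {K : Type} [Field K]

/-- `x` belongs to the valuation ring `O_K`. -/
def Int (V : DVal K) (x : K) : Prop := x = 0 ∨ 0 ≤ V.ν x

/-- `x` is a unit of the valuation ring `O_K`. -/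
def IntUnit (V : DVal K) (x : K) : Prop := x ≠ 0 ∧ V.ν x = 0

/-- `x` belongs to the maximal ideal `m_K` of the valuation ring `O_K`. -/
def MaxIdeal (V : DVal K) (x : K) : Prop := x = 0 ∨ 1 ≤ V.ν x

/-- `K` is complete with respect to the valuation `ν`: every Cauchy sequence converges. -/
def IsComplete (V : DVal K) : Prop :=
  ∀ f : ℕ → K,
    (∀ M : ℤ, ∃ N : ℕ, ∀ m n : ℕ, N ≤ m → N ≤ n →
      f m - f n = 0 ∨ M ≤ V.ν (f m - f n)) →
    ∃ L : K, ∀ M : ℤ, ∃ N : ℕ, ∀ n : ℕ, N ≤ n →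
      f n - L = 0 ∨ M ≤ V.ν (f n - L)

/-- The residue field `k = O_K/m_K` has characteristic different from `2`,
i.e. `2` is a unit of the valuation ring `O_K`. -/
def ResCharNeTwo (V : DVal K) : Prop := (2 : K) ≠ 0 ∧ V.ν 2 = 0

end DVal

/-- The reduced norm of a quaternion `u = δ + αx + βy + γz ∈ ℍ[K,a,b]`:
`Nrd u = u·τ(u) = δ² - aα² - bβ² + abγ²`. -/
def qnrd {K : Type} [Field K] (a b : K) (u : QuaternionAlgebra K a 0 b) : K :=
  u.re ^ 2 - a * u.imI ^ 2 - b * u.imJ ^ 2 + a * b * u.imK ^ 2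

/-- The canonical involution `τ(δ + αx + βy + γz) = δ - αx - βy - γz` of `ℍ[K,a,b]`. -/
def qtau {K : Type} [Field K] {a b : K} (u : QuaternionAlgebra K a 0 b) :
    QuaternionAlgebra K a 0 b :=
  ⟨u.re, -u.imI, -u.imJ, -u.imK⟩

/-- The norm form `⟨1,-a,-b,ab⟩` of `ℍ[K,a,b]` is anisotropic over `K`
(equivalently, `ℍ[K,a,b]` is a division ring). -/
def QAniso {K : Type} [Field K] (a b : K) : Prop :=
  ∀ d e f g : K, d ^ 2 - a * e ^ 2 - b * f ^ 2 + a * b * g ^ 2 = 0 →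
    d = 0 ∧ e = 0 ∧ f = 0 ∧ g = 0

/-- The valuation `ν_D(u) = (1/2)·ν_K(Nrd u)` of the quaternion division algebra
`D = ℍ[K,a,b]` (at nonzero `u`). -/
def qnu {K : Type} [Field K] (V : DVal K) (a b : K) (u : QuaternionAlgebra K a 0 b) : ℚ :=
  (V.ν (qnrd a b u) : ℚ) / 2

/-!
Write `u = v + w` with `v = δ + αx` and `w = βy + γz`. Both are `ε`-symmetric for `σ = τ_λ`,
and `w² = ϖQ`, `(wv)² = w² v̄ v = ϖQP` are central, where `P = δ² - aα²`, `Q = β² - aγ²`.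
Hence `t = c + d·wv` satisfies `σ(t) w = w t`, and `σ(t) w t = w t² = v + w` as soon as
`c² + ϖQP d² = 1` and `2cd·ϖQ = 1`. These are solved by Hensel's lemma, because
`ν(ϖQP·(ϖQ)⁻²) = ν P - ν(ϖQ) ≥ 1`: the value `ν(P - ϖQ) = ν(Nrd u) = 1` is odd, whereas `ν P` is
even (`a` is a unit which is not a square, hence not a square modulo `m_K`), so `P ∈ m_K²` and
`ν(ϖQ) = 1`.
-/

open scoped Quaternion

namespace DVal

variable {K : Type} [Field K] {V : DVal K}

/-- `ν x ≥ M`, reading `ν 0` as `+∞` (the value of `ν` at `0` is junk). -/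
def ValGe (V : DVal K) (M : ℤ) (x : K) : Prop := x = 0 ∨ M ≤ V.ν x

theorem ν_neg_one : V.ν (-1) = 0 := by
  have h := V.ν_mul (-1) (-1) (by norm_num) (by norm_num)
  rw [neg_one_mul, neg_neg, V.ν_one] at h
  omega

theorem ν_neg {x : K} (hx : x ≠ 0) : V.ν (-x) = V.ν x := by
  rw [← neg_one_mul, V.ν_mul _ _ (by norm_num) hx, ν_neg_one, zero_add]

theorem ν_inv {x : K} (hx : x ≠ 0) : V.ν x⁻¹ = -V.ν x := by
  have h := V.ν_mul x x⁻¹ hx (inv_ne_zero hx)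
  rw [mul_inv_cancel₀ hx, V.ν_one] at h
  omega

theorem ν_sq {x : K} (hx : x ≠ 0) : V.ν (x ^ 2) = 2 * V.ν x := by
  rw [sq, V.ν_mul x x hx hx]; ring

namespace ValGe

variable {M M' : ℤ} {x y : K}

theorem mono (h : M' ≤ M) (hx : V.ValGe M x) : V.ValGe M' x :=
  hx.imp_right h.trans

theorem neg (hx : V.ValGe M x) : V.ValGe M (-x) := by
  by_cases h0 : x = 0
  · exact Or.inl (by rw [h0, neg_zero])
  · exact hx.imp (fun h => absurd h h0) (fun h => (ν_neg h0).symm ▸ h)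

theorem add (hx : V.ValGe M x) (hy : V.ValGe M y) : V.ValGe M (x + y) := by
  by_cases hx0 : x = 0
  · rwa [hx0, zero_add]
  by_cases hy0 : y = 0
  · rwa [hy0, add_zero]
  by_cases hxy : x + y = 0
  · exact Or.inl hxy
  refine Or.inr (le_trans (le_min ?_ ?_) (V.ν_add x y hx0 hy0 hxy))
  · exact hx.resolve_left hx0
  · exact hy.resolve_left hy0

theorem sub (hx : V.ValGe M x) (hy : V.ValGe M y) : V.ValGe M (x - y) := by
  rw [sub_eq_add_neg]; exact hx.add hy.neg

theorem mul (hx : V.ValGe M x) (hy : V.ValGe M' y) : V.ValGe (M + M') (x * y) := by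
  by_cases hx0 : x = 0
  · exact Or.inl (by rw [hx0, zero_mul])
  by_cases hy0 : y = 0
  · exact Or.inl (by rw [hy0, mul_zero])
  rw [ValGe, V.ν_mul x y hx0 hy0]
  exact Or.inr (add_le_add (hx.resolve_left hx0) (hy.resolve_left hy0))

theorem sq (hx : V.ValGe M x) : V.ValGe (2 * M) (x ^ 2) := by
  rw [two_mul, pow_two]; exact hx.mul hx

theorem div (hx : V.ValGe M x) (hy : y ≠ 0) : V.ValGe (M - V.ν y) (x / y) := by
  rw [div_eq_mul_inv, sub_eq_add_neg]
  exact hx.mul (Or.inr (ν_inv hy).ge)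

theorem of_sq (h : V.ValGe (2 * M - 1) (x ^ 2)) : V.ValGe M x := by
  by_cases hx0 : x = 0
  · exact Or.inl hx0
  have := h.resolve_left (pow_ne_zero 2 hx0)
  rw [ν_sq hx0] at this
  exact Or.inr (by omega)

theorem ne_zero_and_ν_eq_zero (h0 : V.ValGe 0 x) (h1 : ¬V.ValGe 1 x) : x ≠ 0 ∧ V.ν x = 0 := by
  simp only [ValGe, not_or, not_le] at h1
  exact ⟨h1.1, by have := h0.resolve_left h1.1; omega⟩

end ValGe

theorem valGe_of_ν_eq {M : ℤ} {x : K} (h : V.ν x = M) : V.ValGe M x := Or.inr h.ge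

theorem ν_add_eq_of_valGe {x y : K} (hx : x ≠ 0) (hy : V.ValGe (V.ν x + 1) y) :
    x + y ≠ 0 ∧ V.ν (x + y) = V.ν x := by
  by_cases hy0 : y = 0
  · rw [hy0, add_zero]; exact ⟨hx, rfl⟩
  have hyν := hy.resolve_left hy0
  have hxy : x + y ≠ 0 := by
    intro h
    rw [add_eq_zero_iff_eq_neg.mp h, ν_neg hy0] at hyν
    omega
  have h1 := V.ν_add x y hx hy0 hxy
  have h2 := V.ν_add (x + y) (-y) hxy (neg_ne_zero.mpr hy0) (by rwa [add_neg_cancel_right])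
  rw [add_neg_cancel_right, ν_neg hy0] at h2
  exact ⟨hxy, by omega⟩

theorem ne_zero_and_ν_eq_zero_of_valGe_sub_one {g : K} (h : V.ValGe 1 (g - 1)) :
    g ≠ 0 ∧ V.ν g = 0 := by
  have := ν_add_eq_of_valGe one_ne_zero (by rwa [V.ν_one])
  rwa [add_sub_cancel, V.ν_one] at this

theorem eq_zero_of_forall_valGe {x : K} (h : ∀ n : ℕ, V.ValGe (n + 1) x) : x = 0 := by
  by_contra hx
  have := (h (V.ν x).toNat).resolve_left hx
  omega

theorem exists_limit (hcomp : V.IsComplete) {f : ℕ → K}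
    (hf : ∀ n : ℕ, V.ValGe (n + 1) (f (n + 1) - f n)) :
    ∃ L, ∀ n : ℕ, V.ValGe (n + 1) (f n - L) := by
  have htel : ∀ n k : ℕ, V.ValGe (n + 1) (f (n + k) - f n) := by
    intro n k
    induction k with
    | zero => exact Or.inl (by simp)
    | succ k ih =>
      rw [← add_assoc, ← sub_add_sub_cancel _ (f (n + k))]
      exact ((hf (n + k)).mono (by push_cast; omega)).add ih
  have hclose : ∀ (M : ℤ) (i j : ℕ), M ≤ min i j + 1 → V.ValGe M (f i - f j) := by
    intro M i j hM
    rcases le_total j i with h | h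
    · obtain ⟨k, rfl⟩ := Nat.exists_eq_add_of_le h
      exact (htel j k).mono (by omega)
    · obtain ⟨k, rfl⟩ := Nat.exists_eq_add_of_le h
      rw [← neg_sub]
      exact ((htel i k).mono (by omega)).neg
  obtain ⟨L, hL⟩ := hcomp f fun M =>
    ⟨M.toNat, fun i j hi hj => hclose M i j (by omega)⟩
  refine ⟨L, fun n => ?_⟩
  obtain ⟨N, hN⟩ := hL (n + 1)
  rw [← sub_add_sub_cancel _ (f (max N n)), ← neg_sub]
  exact (hclose _ _ _ (by omega)).neg.add (hN _ (le_max_left N n))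

/-- One step of Heron's iteration `g ↦ (g + c/g)/2` for `√c`. -/
theorem heron_step (h2 : V.ResCharNeTwo) {c g : K} {M : ℤ} (hM : 1 ≤ M)
    (hg : V.ValGe 1 (g - 1)) (hgc : V.ValGe M (g ^ 2 - c)) :
    V.ValGe M ((g + c / g) / 2 - g) ∧ V.ValGe (M + 1) (((g + c / g) / 2) ^ 2 - c) := by
  obtain ⟨hg0, hgν⟩ := ne_zero_and_ν_eq_zero_of_valGe_sub_one hg
  have h2g : 2 * g ≠ 0 := mul_ne_zero h2.1 hg0
  have hq : V.ValGe M ((g ^ 2 - c) / (2 * g)) := by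
    simpa [V.ν_mul 2 g h2.1 hg0, h2.2, hgν] using hgc.div h2g
  have h20 := h2.1
  have e1 : (g + c / g) / 2 - g = -((g ^ 2 - c) / (2 * g)) := by
    field_simp; ring
  have e2 : ((g + c / g) / 2) ^ 2 - c = ((g ^ 2 - c) / (2 * g)) ^ 2 := by
    field_simp; ring
  exact ⟨e1 ▸ hq.neg, e2 ▸ hq.sq.mono (by omega)⟩

theorem exists_sq_eq_one_add (hcomp : V.IsComplete) (h2 : V.ResCharNeTwo) {m : K}
    (hm : V.ValGe 1 m) : ∃ s, s ^ 2 = 1 + m ∧ V.ValGe 1 (s - 1) := by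
  set f : ℕ → K := fun n => (fun g => (g + (1 + m) / g) / 2)^[n] 1
  have hf0 : f 0 = 1 := rfl
  have hfs : ∀ n, f (n + 1) = (f n + (1 + m) / f n) / 2 := fun n =>
    Function.iterate_succ_apply' _ n 1
  have hinv : ∀ n : ℕ, V.ValGe 1 (f n - 1) ∧ V.ValGe (n + 1) (f n ^ 2 - (1 + m)) := by
    intro n
    induction n with
    | zero => exact ⟨Or.inl (by rw [hf0, sub_self]), by simpa [hf0] using hm.neg⟩
    | succ n ih =>
      obtain ⟨hstep, hsq⟩ := heron_step h2 (by omega) ih.1 ih.2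
      rw [hfs, ← sub_add_sub_cancel _ (f n)]
      exact ⟨(hstep.mono (by omega)).add ih.1, by exact_mod_cast hsq⟩
  obtain ⟨L, hL⟩ := exists_limit hcomp (f := f) fun n => by
    rw [hfs]; exact (heron_step h2 (by omega) (hinv n).1 (hinv n).2).1
  have hL1 : V.ValGe 1 (L - 1) := by
    have := (hL 0).neg
    rwa [hf0, neg_sub] at this
  refine ⟨L, sub_eq_zero.mp (eq_zero_of_forall_valGe (V := V) fun n => ?_), hL1⟩
  have hsum : V.ValGe 0 (L + f n) := by
    rw [show L + f n = (L - 1) + (f n - 1) + 2 by ring]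
    exact ((hL1.mono zero_le_one).add ((hinv n).1.mono zero_le_one)).add (valGe_of_ν_eq h2.2)
  rw [show L ^ 2 - (1 + m) = -(f n - L) * (L + f n) + (f n ^ 2 - (1 + m)) by ring]
  have hprod : V.ValGe (n + 1) (-(f n - L) * (L + f n)) := by simpa using (hL n).neg.mul hsum
  exact hprod.add (hinv n).2

/-- `(c + d√-q)² = 1 + R√-q`: take `c² = (1 + √(1 - qR²))/2` and `d = R/(2c)`. -/
theorem exists_sq_add_mul_sq_eq_one (hcomp : V.IsComplete) (h2 : V.ResCharNeTwo) {q R : K}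
    (h : V.ValGe 1 (q * R ^ 2)) :
    ∃ c d : K, c ≠ 0 ∧ c ^ 2 + q * d ^ 2 = 1 ∧ 2 * c * d = R := by
  obtain ⟨s, hs, hs1⟩ := exists_sq_eq_one_add hcomp h2 h.neg
  obtain ⟨c, hc, hc1⟩ := exists_sq_eq_one_add hcomp h2 (m := (s - 1) / 2) (by
    simpa [h2.2] using hs1.div h2.1)
  have hc0 := (ne_zero_and_ν_eq_zero_of_valGe_sub_one hc1).1
  have h20 := h2.1
  have hc' : 2 * c ^ 2 = s + 1 := by rw [hc]; field_simp; ring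
  refine ⟨c, R / (2 * c), hc0, ?_, by field_simp⟩
  field_simp
  linear_combination (2 * c ^ 2 + s - 1) * hc' + hs

variable {a : K}

/-- Over the residue field, `x² - a y²` is anisotropic, since a unit that is a square mod `m_K`
is a square by Hensel. -/
theorem sq_sub_mul_sq_ne_zero_and_ν_eq_zero (hcomp : V.IsComplete) (h2 : V.ResCharNeTwo)
    (ha : ¬IsSquare a) (ha0 : a ≠ 0) (hva : V.ν a = 0) {x y : K} (hx : V.ValGe 0 x)
    (hy : V.ValGe 0 y) (hxy : ¬(V.ValGe 1 x ∧ V.ValGe 1 y)) :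
    x ^ 2 - a * y ^ 2 ≠ 0 ∧ V.ν (x ^ 2 - a * y ^ 2) = 0 := by
  have hay : V.ValGe 0 (a * y ^ 2) := by simpa using (valGe_of_ν_eq hva).mul hy.sq
  refine ValGe.ne_zero_and_ν_eq_zero (by simpa using hx.sq.sub hay) fun hF => hxy ?_
  have hx1 : V.ValGe 1 x := by
    by_contra hx1
    obtain ⟨hx0, hνx⟩ := hx.ne_zero_and_ν_eq_zero hx1
    obtain ⟨s, hs, hs1⟩ := exists_sq_eq_one_add hcomp h2 (m := -((x ^ 2 - a * y ^ 2) / x ^ 2))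
      (by simpa [ν_sq hx0, hνx] using (hF.div (pow_ne_zero 2 hx0)).neg)
    have hs0 := (ne_zero_and_ν_eq_zero_of_valGe_sub_one hs1).1
    have hsxy : (s * x) ^ 2 = a * y ^ 2 := by
      rw [mul_pow, hs]; field_simp; ring
    have hy0 : y ≠ 0 := by
      rintro rfl
      simp [hs0, hx0] at hsxy
    exact ha ⟨s * x / y, by field_simp; rw [← hsxy]; ring⟩
  refine ⟨hx1, ValGe.of_sq (M := 1) ?_⟩
  have hay1 : V.ValGe 1 (a * y ^ 2) := by
    rw [show a * y ^ 2 = x ^ 2 - (x ^ 2 - a * y ^ 2) by ring]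
    exact (hx1.sq.mono (by norm_num)).sub hF
  simpa [ha0, hva] using hay1.div ha0

/-- `ν(δ² - aα²)` is even, so `ν(δ² - aα² - ϖQ) = 1` forces `δ² - aα² ∈ m_K²`. -/
theorem valGe_two_and_ν_mul_eq_one (hcomp : V.IsComplete) (h2 : V.ResCharNeTwo)
    (ha : ¬IsSquare a) (ha0 : a ≠ 0) (hva : V.ν a = 0) {ϖ : K} (hvϖ : V.ν ϖ = 1)
    {δ α β γ : K} (hδ : V.ValGe 0 δ) (hα : V.ValGe 0 α) (hβ : V.ValGe 0 β) (hγ : V.ValGe 0 γ)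
    (hN0 : δ ^ 2 - a * α ^ 2 - ϖ * (β ^ 2 - a * γ ^ 2) ≠ 0)
    (hN : V.ν (δ ^ 2 - a * α ^ 2 - ϖ * (β ^ 2 - a * γ ^ 2)) = 1) :
    V.ValGe 2 (δ ^ 2 - a * α ^ 2) ∧ ϖ * (β ^ 2 - a * γ ^ 2) ≠ 0 ∧
      V.ν (ϖ * (β ^ 2 - a * γ ^ 2)) = 1 := by
  have hA : V.ValGe 0 a := valGe_of_ν_eq hva
  have hQ : V.ValGe 1 (ϖ * (β ^ 2 - a * γ ^ 2)) := by
    simpa using (valGe_of_ν_eq hvϖ).mul (hβ.sq.sub (by simpa using hA.mul hγ.sq))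
  have hm : V.ValGe 1 δ ∧ V.ValGe 1 α := by
    by_contra h
    obtain ⟨hP0, hνP⟩ := sq_sub_mul_sq_ne_zero_and_ν_eq_zero hcomp h2 ha ha0 hva hδ hα h
    have := (ν_add_eq_of_valGe hP0 (by rw [hνP]; exact hQ.neg)).2
    rw [← sub_eq_add_neg, hN, hνP] at this
    exact one_ne_zero this
  have hP : V.ValGe 2 (δ ^ 2 - a * α ^ 2) := by
    simpa using hm.1.sq.sub (by simpa using hA.mul hm.2.sq)
  have := ν_add_eq_of_valGe (neg_ne_zero.mpr hN0) (by rw [ν_neg hN0, hN]; exact hP)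
  rw [ν_neg hN0, hN, neg_sub, sub_add_cancel] at this
  exact ⟨hP, this⟩

end DVal

namespace QuaternionAlgebra

variable {R : Type*} [CommRing R] {c₁ c₂ c₃ : R} {lam mu : ℍ[R,c₁,c₂,c₃]}

theorem twist_mul (hml : mu * lam = 1) (p q : ℍ[R,c₁,c₂,c₃]) :
    lam * star (p * q) * mu = lam * star q * mu * (lam * star p * mu) := by
  rw [star_mul]
  calc lam * (star q * star p) * mu = lam * star q * (mu * lam) * star p * mu := by
        rw [hml]; noncomm_ring
    _ = lam * star q * mu * (lam * star p * mu) := by noncomm_ring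

theorem twist_coe (hlm : lam * mu = 1) (r : R) : lam * star (r : ℍ[R,c₁,c₂,c₃]) * mu = r := by
  rw [star_coe, ← coe_commutes, mul_assoc, hlm, mul_one]

theorem twist_mul_mul_eq_add (hlm : lam * mu = 1) (hml : mu * lam = 1)
    {v w : ℍ[R,c₁,c₂,c₃]} {ε s q c d : R} (hε : ε * ε = 1)
    (hv : lam * star v * mu = ε • v) (hw : lam * star w * mu = ε • w)
    (hww : w * w = s) (hwv : w * v * (w * v) = q)
    (hcd : c ^ 2 + q * d ^ 2 = 1) (hcds : 2 * c * d * s = 1) :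
    lam * star (c + d * (w * v)) * mu * w * (c + d * (w * v)) = v + w := by
  have hσt : lam * star (c + d * (w * v)) * mu = c + d * (v * w) := by
    rw [star_add, mul_add, add_mul, twist_coe hlm, twist_mul hml, twist_mul hml, twist_coe hlm,
      hv, hw]
    simp [coe_mul_eq_smul, mul_coe_eq_smul, smul_smul, hε]
  have hcomm : (c + d * (v * w) : ℍ[R,c₁,c₂,c₃]) * w = w * (c + d * (w * v)) := by
    have hvww : v * w * w = w * (w * v) := by
      rw [mul_assoc, ← mul_assoc w, hww, coe_commutes]
    simp only [add_mul, mul_add, coe_mul_eq_smul, mul_coe_eq_smul, smul_mul_assoc, mul_smul_comm,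
      hvww]
  have hsq : (c + d * (w * v) : ℍ[R,c₁,c₂,c₃]) * (c + d * (w * v)) =
      1 + (2 * c * d : R) * (w * v) := by
    simp only [add_mul, mul_add, coe_mul_eq_smul, mul_coe_eq_smul, smul_mul_assoc, mul_smul_comm,
      hwv, smul_smul]
    simp only [← coe_algebraMap, Algebra.algebraMap_eq_smul_one]
    conv_rhs => rw [← one_smul R (1 : ℍ[R,c₁,c₂,c₃]), ← hcd]
    module
  calc _ = w * ((c + d * (w * v) : ℍ[R,c₁,c₂,c₃]) * (c + d * (w * v))) := by
        rw [hσt, hcomm, mul_assoc]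
    _ = v + w := by
        rw [hsq, mul_add, mul_one, coe_mul_eq_smul, mul_smul_comm, ← mul_assoc, hww,
          coe_mul_eq_smul, smul_smul, hcds, one_smul, add_comm]

end QuaternionAlgebra

section

variable {K : Type} [Field K] {a b : K}

theorem qtau_eq_star (u : ℍ[K,a,0,b]) : qtau u = star u := by
  ext <;> simp [qtau]

theorem QAniso.not_isSquare (h : QAniso a b) : ¬IsSquare a := by
  rintro ⟨r, rfl⟩
  exact one_ne_zero (h r 1 0 0 (by ring)).2.1

theorem qnrd_mk (δ α β γ : K) :
    qnrd a b ⟨δ, α, β, γ⟩ = δ ^ 2 - a * α ^ 2 - b * (β ^ 2 - a * γ ^ 2) := by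
  simp only [qnrd]; ring

theorem qnrd_ne_zero (h : QAniso a b) {u : ℍ[K,a,0,b]} (hu : u ≠ 0) : qnrd a b u ≠ 0 :=
  fun h0 => hu (by obtain ⟨h₁, h₂, h₃, h₄⟩ := h _ _ _ _ h0; ext <;> assumption)

theorem mul_star_eq_qnrd (u : ℍ[K,a,0,b]) : u * star u = qnrd a b u := by
  ext <;> simp [qnrd, -QuaternionAlgebra.coe_mul, -QuaternionAlgebra.coe_sub,
    -QuaternionAlgebra.coe_add, -QuaternionAlgebra.coe_pow] <;> ring

theorem star_mul_eq_qnrd (u : ℍ[K,a,0,b]) : star u * u = qnrd a b u := by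
  ext <;> simp [qnrd, -QuaternionAlgebra.coe_mul, -QuaternionAlgebra.coe_sub,
    -QuaternionAlgebra.coe_add, -QuaternionAlgebra.coe_pow] <;> ring

theorem isUnit_of_qnrd_ne_zero {u : ℍ[K,a,0,b]} (hu : qnrd a b u ≠ 0) : IsUnit u := by
  refine isUnit_iff_exists.mpr ⟨(qnrd a b u)⁻¹ • star u, ?_, ?_⟩
  · rw [mul_smul_comm, mul_star_eq_qnrd, ← QuaternionAlgebra.coe_mul_eq_smul,
      ← QuaternionAlgebra.coe_mul, inv_mul_cancel₀ hu, QuaternionAlgebra.coe_one]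
  · rw [smul_mul_assoc, star_mul_eq_qnrd, ← QuaternionAlgebra.coe_mul_eq_smul,
      ← QuaternionAlgebra.coe_mul, inv_mul_cancel₀ hu, QuaternionAlgebra.coe_one]

theorem exists_twist_eq_mk {lam mu : ℍ[K,a,0,b]} (ha : a ≠ 0) (hb : b ≠ 0)
    (hlam : lam = 1 ∨ lam = ⟨0, 1, 0, 0⟩ ∨ lam = ⟨0, 0, 1, 0⟩) (hml : mu * lam = 1) :
    ∃ s₁ s₂ s₃ : K, ∀ u : ℍ[K,a,0,b],
      lam * star u * mu = ⟨u.re, s₁ * u.imI, s₂ * u.imJ, s₃ * u.imK⟩ := by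
  rcases hlam with rfl | rfl | rfl
  · obtain rfl : mu = 1 := by rwa [mul_one] at hml
    exact ⟨-1, -1, -1, fun u => by ext <;> simp⟩
  · obtain rfl : mu = ⟨0, a⁻¹, 0, 0⟩ := left_inv_eq_right_inv hml (by ext <;> simp [ha])
    exact ⟨-1, 1, 1, fun u => by ext <;> simp <;> field_simp⟩
  · obtain rfl : mu = ⟨0, 0, b⁻¹, 0⟩ := left_inv_eq_right_inv hml (by ext <;> simp [hb])
    exact ⟨1, -1, 1, fun u => by ext <;> simp <;> field_simp⟩

theorem twist_mk_eq_smul_of_twist_eq_smul {lam mu : ℍ[K,a,0,b]} (ha : a ≠ 0) (hb : b ≠ 0)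
    (hlam : lam = 1 ∨ lam = ⟨0, 1, 0, 0⟩ ∨ lam = ⟨0, 0, 1, 0⟩) (hml : mu * lam = 1)
    {ε δ α β γ : K} (h : lam * star ⟨δ, α, β, γ⟩ * mu = ε • (⟨δ, α, β, γ⟩ : ℍ[K,a,0,b])) :
    lam * star ⟨δ, α, 0, 0⟩ * mu = ε • (⟨δ, α, 0, 0⟩ : ℍ[K,a,0,b]) ∧
      lam * star ⟨0, 0, β, γ⟩ * mu = ε • (⟨0, 0, β, γ⟩ : ℍ[K,a,0,b]) := by
  obtain ⟨s₁, s₂, s₃, hs⟩ := exists_twist_eq_mk ha hb hlam hml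
  rw [hs, QuaternionAlgebra.smul_mk, QuaternionAlgebra.mk.injEq] at h
  obtain ⟨h₀, h₁, h₂, h₃⟩ := h
  constructor <;> rw [hs, QuaternionAlgebra.smul_mk] <;> ext <;> dsimp only <;>
    first | assumption | simp

theorem mk_mul_self (β γ : K) :
    (⟨0, 0, β, γ⟩ : ℍ[K,a,0,b]) * ⟨0, 0, β, γ⟩ = ↑(b * (β ^ 2 - a * γ ^ 2)) := by
  ext <;> simp [-QuaternionAlgebra.coe_mul, -QuaternionAlgebra.coe_sub, -QuaternionAlgebra.coe_pow]
    <;> ring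

theorem mk_mul_mk_mul_self (δ α β γ : K) :
    (⟨0, 0, β, γ⟩ * ⟨δ, α, 0, 0⟩ : ℍ[K,a,0,b]) * (⟨0, 0, β, γ⟩ * ⟨δ, α, 0, 0⟩) =
      ↑(b * (β ^ 2 - a * γ ^ 2) * (δ ^ 2 - a * α ^ 2)) := by
  ext <;> simp [-QuaternionAlgebra.coe_mul, -QuaternionAlgebra.coe_sub, -QuaternionAlgebra.coe_pow]
    <;> ring

end

/-- a ramified diagonal entry `u = δ + αx + βy + γz` (of value `1/2`)
of an ε-hermitian form over `(D, τ_λ)`, `λ ∈ {1,x,y}`, is isometric to `βy + γz`. -/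
theorem stmt_4 (K : Type) [Field K] (V : DVal K)
    -- K is complete with residue field of characteristic ≠ 2
    (hcomp : V.IsComplete) (hchar : V.ResCharNeTwo)
    -- D = ℍ[K,a,ϖ] with a ∈ O_K^×, ϖ a uniformizer, D a division ring
    (a ϖ : K) (ha0 : a ≠ 0) (hva : V.ν a = 0) (hϖ0 : ϖ ≠ 0) (hvϖ : V.ν ϖ = 1)
    (haniso : QAniso a ϖ)
    -- σ = τ_λ with λ ∈ {1, x, y} (μ = λ⁻¹)
    (lam mu : QuaternionAlgebra K a 0 ϖ)
    (hlam : lam = 1 ∨ lam = (⟨0, 1, 0, 0⟩ : QuaternionAlgebra K a 0 ϖ) ∨ lam = (⟨0, 0, 1, 0⟩ : QuaternionAlgebra K a 0 ϖ))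
    (hmu : lam * mu = 1) (hmu' : mu * lam = 1)
    (σ : QuaternionAlgebra K a 0 ϖ → QuaternionAlgebra K a 0 ϖ)
    (hσ : ∀ u, σ u = lam * qtau u * mu)
    -- ε ∈ {1, -1}
    (ε : K) (hε : ε = 1 ∨ ε = -1)
    -- u = δ + αx + βy + γz with coordinates in O_K, σ(u) = ε·u, ν_D(u) = 1/2
    (δ α β γ : K) (hδ : V.Int δ) (hα : V.Int α) (hβ : V.Int β) (hγ : V.Int γ)
    (hu0 : (⟨δ, α, β, γ⟩ : QuaternionAlgebra K a 0 ϖ) ≠ 0)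
    (hsym : σ ⟨δ, α, β, γ⟩ = ε • (⟨δ, α, β, γ⟩ : QuaternionAlgebra K a 0 ϖ))
    (hval : qnu V a ϖ (⟨δ, α, β, γ⟩ : QuaternionAlgebra K a 0 ϖ) = 1 / 2) :
    ∃ t : QuaternionAlgebra K a 0 ϖ, IsUnit t ∧
      (⟨δ, α, β, γ⟩ : QuaternionAlgebra K a 0 ϖ) =
        σ t * (⟨0, 0, β, γ⟩ : QuaternionAlgebra K a 0 ϖ) * t := by
  simp only [hσ, qtau_eq_star] at hsym ⊢
  obtain ⟨hv, hw⟩ := twist_mk_eq_smul_of_twist_eq_smul ha0 hϖ0 hlam hmu' hsym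
  have hN0 := qnrd_ne_zero haniso hu0
  have hN1 : V.ν (qnrd a ϖ ⟨δ, α, β, γ⟩) = 1 := by
    rw [qnu, div_eq_iff two_ne_zero, one_div_mul_cancel two_ne_zero] at hval
    exact_mod_cast hval
  rw [qnrd_mk] at hN0 hN1
  obtain ⟨hP, hQ0, hQ⟩ := DVal.valGe_two_and_ν_mul_eq_one hcomp hchar haniso.not_isSquare ha0 hva
    hvϖ hδ hα hβ hγ hN0 hN1
  set P := δ ^ 2 - a * α ^ 2
  set Q := ϖ * (β ^ 2 - a * γ ^ 2)
  have hR : V.ValGe 1 (Q * P * Q⁻¹ ^ 2) := by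
    rw [show Q * P * Q⁻¹ ^ 2 = P / Q by field_simp]
    simpa [hQ] using hP.div hQ0
  obtain ⟨c, d, hc0, hcd, hcds⟩ := DVal.exists_sq_add_mul_sq_eq_one hcomp hchar hR
  set t : QuaternionAlgebra K a 0 ϖ := c + d * (⟨0, 0, β, γ⟩ * ⟨δ, α, 0, 0⟩)
  have ht : t ≠ 0 := fun h => hc0 (by simpa [t] using congrArg QuaternionAlgebra.re h)
  refine ⟨t, isUnit_of_qnrd_ne_zero (qnrd_ne_zero haniso ht), ?_⟩
  rw [QuaternionAlgebra.twist_mul_mul_eq_add hmu hmu' (by rcases hε with rfl | rfl <;> norm_num)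
    hv hw (mk_mul_self β γ) (mk_mul_mk_mul_self δ α β γ) hcd (by rw [hcds, inv_mul_cancel₀ hQ0])]
  ext <;> simp
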